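/- arXiv:1909.06777 — 2 statements merged into one kernel-verified Lean document; each statement's English description precedes it below -/
import Mathlib

section
/- Let I be a finite set with the discrete metric d, Y a closed subset of a Banach space, and for each i ∈ I a continuous semiflow S_i : ℝ₊ × Y → Y satisfying ‖S_{i₁}(t,y₁) − S_{i₂}(t,y₂)‖ ≤ L e^{αt} ‖y₁ − y₂‖ + t L̄ d(i₁,i₂) for constants L, L̄ > 0 and α < λ. If g : Y × I → ℝ is bounded and Lipschitz with respect to the metric ρ_c((y₁,i₁),(y₂,i₂)) = ‖y₁−y₂‖ + c d(i₁,i₂) (c ≥ 1), then the function Gg(y,i) := ∫₀^∞ λ e^{-λt} g(S_i(t,y), i) dt is bounded and Lipschitz with Lipschitz constant at most |g|_Lip (λL/(λ−α) + L̄/λ + c). -/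
open MeasureTheory

lemma aux_intOn_exp {b : ℝ} (hb : 0 < b) :
    IntegrableOn (fun t => Real.exp (-(b*t))) (Set.Ioi (0:ℝ)) := by
  simpa [neg_mul] using exp_neg_integrableOn_Ioi 0 hb

lemma aux_intOn_texp {b : ℝ} (hb : 0 < b) :
    IntegrableOn (fun t => t * Real.exp (-(b*t))) (Set.Ioi (0:ℝ)) := by
  have h := integrableOn_rpow_mul_exp_neg_mul_rpow (by norm_num : (-1:ℝ) < 1) zero_lt_one hb
  simpa [Real.rpow_one, neg_mul] using h

lemma aux_int_exp {b : ℝ} (hb : 0 < b) :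
    ∫ t in Set.Ioi (0:ℝ), Real.exp (-(b*t)) = 1/b := by
  have h := Real.integral_rpow_mul_exp_neg_mul_Ioi zero_lt_one hb
  simpa [Real.Gamma_one, Real.rpow_one] using h

lemma aux_int_texp {b : ℝ} (hb : 0 < b) :
    ∫ t in Set.Ioi (0:ℝ), t * Real.exp (-(b*t)) = 1/b^2 := by
  have h := Real.integral_rpow_mul_exp_neg_mul_Ioi two_pos hb
  rw [show ((2:ℝ)-1) = 1 by norm_num] at h
  simp only [Real.rpow_one, Real.Gamma_two, mul_one] at h
  rw [h, show ((2:ℝ):ℝ) = ((2:ℕ):ℝ) by norm_num, Real.rpow_natCast]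
  rw [div_pow, one_pow]

/-- resolvent-type operator `G` maps bounded Lipschitz functions (w.r.t. the metric
`ρ_c((y₁,i₁),(y₂,i₂)) = ‖y₁-y₂‖ + c d(i₁,i₂)`) to bounded Lipschitz functions, with Lipschitz
constant at most `|g|_Lip (λL/(λ-α) + L̄/λ + c)`, under the semiflow Lipschitz estimate. -/
theorem stmt_5 {H : Type*} [NormedAddCommGroup H] [NormedSpace ℝ H] [CompleteSpace H]
    [SecondCountableTopology H]
    {I : Type*} [Fintype I] [DecidableEq I]
    (Y : Set H) (hY : IsClosed Y)
    (l α L Lbar c : ℝ) (hl : 0 < l) (hα : α < l) (hL : 0 < L) (hLbar : 0 < Lbar) (hc : 1 ≤ c)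
    (S : I → ℝ → Y → Y)
    (hScont : ∀ i, Continuous (fun p : ℝ × Y => S i p.1 p.2))
    (hSflow0 : ∀ i y, S i 0 y = y)
    (hSflow : ∀ i s t y, 0 ≤ s → 0 ≤ t → S i (s + t) y = S i s (S i t y))
    (hSLip : ∀ i₁ i₂ : I, ∀ y₁ y₂ : Y, ∀ t : ℝ, 0 ≤ t →
      ‖(S i₁ t y₁ : H) - (S i₂ t y₂ : H)‖
        ≤ L * Real.exp (α * t) * ‖(y₁ : H) - (y₂ : H)‖
          + t * Lbar * (if i₁ = i₂ then (0:ℝ) else 1))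
    (g : Y × I → ℝ)
    (Mg : ℝ) (hgb : ∀ p, |g p| ≤ Mg)
    (Kg : ℝ) (hgLip : ∀ p q : Y × I,
      |g p - g q| ≤ Kg * (‖(p.1 : H) - (q.1 : H)‖ + c * (if p.2 = q.2 then (0:ℝ) else 1))) :
    (∃ M : ℝ, ∀ y : Y, ∀ i : I,
        |∫ t in Set.Ici (0:ℝ), l * Real.exp (-l * t) * g (S i t y, i)| ≤ M) ∧
    (∀ y₁ y₂ : Y, ∀ i₁ i₂ : I,
      |(∫ t in Set.Ici (0:ℝ), l * Real.exp (-l * t) * g (S i₁ t y₁, i₁))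
          - ∫ t in Set.Ici (0:ℝ), l * Real.exp (-l * t) * g (S i₂ t y₂, i₂)|
        ≤ Kg * (l * L / (l - α) + Lbar / l + c)
            * (‖(y₁ : H) - (y₂ : H)‖ + c * (if i₁ = i₂ then (0:ℝ) else 1))) := by
  classical
  -- continuity of g in the first variable
  have hgcont : ∀ i : I, Continuous (fun y : Y => g (y, i)) := by
    intro i
    have hlip : LipschitzWith (Real.toNNReal (max Kg 0)) (fun y : Y => g (y, i)) := by
      apply LipschitzWith.of_dist_le_mul
      intro a b
      have h : |g (a, i) - g (b, i)| ≤ Kg * ‖(a:H) - (b:H)‖ := by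
        simpa using hgLip (a, i) (b, i)
      have hρ : (0:ℝ) ≤ ‖(a:H) - (b:H)‖ := norm_nonneg _
      have h' : |g (a, i) - g (b, i)| ≤ max Kg 0 * ‖(a:H) - (b:H)‖ :=
        h.trans (mul_le_mul_of_nonneg_right (le_max_left _ _) hρ)
      rw [Real.dist_eq, Subtype.dist_eq, dist_eq_norm]
      rwa [Real.coe_toNNReal _ (le_max_right _ _)]
    exact hlip.continuous
  have hfc : ∀ (y : Y) (i : I),
      Continuous (fun t : ℝ => l * Real.exp (-l * t) * g (S i t y, i)) := by
    intro y i
    have h1 : Continuous (fun t : ℝ => S i t y) :=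
      (hScont i).comp (continuous_id.prodMk continuous_const)
    exact (continuous_const.mul (Real.continuous_exp.comp (continuous_const.mul continuous_id)
      )).mul ((hgcont i).comp h1)
  -- integrability
  have hint : ∀ (y : Y) (i : I),
      IntegrableOn (fun t : ℝ => l * Real.exp (-l * t) * g (S i t y, i)) (Set.Ioi 0) := by
    intro y i
    have hMg0 : 0 ≤ Mg := (abs_nonneg _).trans (hgb (S i 0 y, i))
    refine Integrable.mono' ((aux_intOn_exp hl).const_mul (l * Mg))
      (hfc y i).aestronglyMeasurable (Filter.Eventually.of_forall fun t => ?_)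
    have he : (0:ℝ) < Real.exp (-l * t) := Real.exp_pos _
    rw [Real.norm_eq_abs, abs_mul, abs_mul, abs_of_pos hl, abs_of_pos he]
    have := hgb (S i t y, i)
    calc l * Real.exp (-l * t) * |g (S i t y, i)| ≤ l * Real.exp (-l * t) * Mg := by
          exact mul_le_mul_of_nonneg_left this (by positivity)
      _ = l * Mg * Real.exp (-(l * t)) := by rw [neg_mul]; ring
  constructor
  · -- boundedness
    refine ⟨Mg, fun y i => ?_⟩
    rw [MeasureTheory.integral_Ici_eq_integral_Ioi, ← Real.norm_eq_abs]
    have h := norm_integral_le_of_norm_le ((aux_intOn_exp hl).const_mul (l * Mg))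
      (Filter.Eventually.of_forall (fun t => ?_)
        : ∀ᵐ t ∂(volume.restrict (Set.Ioi (0:ℝ))),
          ‖l * Real.exp (-l * t) * g (S i t y, i)‖ ≤ l * Mg * Real.exp (-(l * t)))
    · refine h.trans ?_
      rw [MeasureTheory.integral_const_mul, aux_int_exp hl]
      have : l * Mg * (1 / l) = Mg := by field_simp
      exact le_of_eq this
    · have he : (0:ℝ) < Real.exp (-l * t) := Real.exp_pos _
      rw [Real.norm_eq_abs, abs_mul, abs_mul, abs_of_pos hl, abs_of_pos he]
      have := hgb (S i t y, i)
      calc l * Real.exp (-l * t) * |g (S i t y, i)| ≤ l * Real.exp (-l * t) * Mg := by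
            exact mul_le_mul_of_nonneg_left this (by positivity)
        _ = l * Mg * Real.exp (-(l * t)) := by rw [neg_mul]; ring
  · -- Lipschitz estimate
    intro y₁ y₂ i₁ i₂
    by_cases h0 : y₁ = y₂ ∧ i₁ = i₂
    · obtain ⟨h1, h2⟩ := h0
      subst h1; subst h2
      simp
    · set D : ℝ := ‖(y₁ : H) - (y₂ : H)‖ with hD
      set d : ℝ := (if i₁ = i₂ then (0:ℝ) else 1) with hd
      -- Kg is nonnegative
      have hρpos : 0 < D + c * d := by
        by_cases hii : i₁ = i₂
        · have hy : y₁ ≠ y₂ := fun h => h0 ⟨h, hii⟩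
          have : (y₁ : H) ≠ (y₂ : H) := fun h => hy (Subtype.coe_injective h)
          have hDpos : 0 < D := by
            rw [hD]; exact norm_sub_pos_iff.mpr this
          have : 0 ≤ c * d := by
            have : 0 ≤ d := by rw [hd]; split <;> norm_num
            positivity
          linarith
        · have hd1 : d = 1 := by rw [hd, if_neg hii]
          have : 0 ≤ D := norm_nonneg _
          rw [hd1]; linarith
      have hKg : 0 ≤ Kg := by
        by_contra hneg
        push_neg at hneg
        have h := hgLip (y₁, i₁) (y₂, i₂)
        have : Kg * (D + c * d) < 0 := mul_neg_of_neg_of_pos hneg hρpos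
        have habs : 0 ≤ |g (y₁, i₁) - g (y₂, i₂)| := abs_nonneg _
        simp only [← hD, ← hd] at h
        linarith
      have hlα : 0 < l - α := by linarith
      have hd0 : 0 ≤ d := by rw [hd]; split <;> norm_num
      have hd1 : d ≤ c * d := by nlinarith
      -- the dominating function
      set φ : ℝ → ℝ := fun t =>
        Kg * L * D * l * Real.exp (-((l - α) * t))
          + (Kg * Lbar * d * l * (t * Real.exp (-(l * t)))
            + Kg * c * d * l * Real.exp (-(l * t))) with hφ
      have hφint : IntegrableOn φ (Set.Ioi (0:ℝ)) := by
        exact (((aux_intOn_exp hlα).const_mul _).add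
          (((aux_intOn_texp hl).const_mul _).add ((aux_intOn_exp hl).const_mul _)))
      rw [MeasureTheory.integral_Ici_eq_integral_Ioi,
        MeasureTheory.integral_Ici_eq_integral_Ioi,
        ← MeasureTheory.integral_sub (hint y₁ i₁) (hint y₂ i₂), ← Real.norm_eq_abs]
      have hbound : ∀ᵐ t ∂(volume.restrict (Set.Ioi (0:ℝ))),
          ‖l * Real.exp (-l * t) * g (S i₁ t y₁, i₁)
            - l * Real.exp (-l * t) * g (S i₂ t y₂, i₂)‖ ≤ φ t := by
        refine (ae_restrict_mem measurableSet_Ioi).mono fun t ht => ?_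
        have ht0 : (0:ℝ) ≤ t := le_of_lt ht
        have he : (0:ℝ) < Real.exp (-l * t) := Real.exp_pos _
        have hgd : |g (S i₁ t y₁, i₁) - g (S i₂ t y₂, i₂)|
            ≤ Kg * (L * Real.exp (α * t) * D + t * Lbar * d + c * d) := by
          have h1 := hgLip (S i₁ t y₁, i₁) (S i₂ t y₂, i₂)
          have h2 := hSLip i₁ i₂ y₁ y₂ t ht0
          simp only [← hd, ← hD] at h1 h2
          calc |g (S i₁ t y₁, i₁) - g (S i₂ t y₂, i₂)|
              ≤ Kg * (‖(S i₁ t y₁ : H) - (S i₂ t y₂ : H)‖ + c * d) := h1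
            _ ≤ Kg * (L * Real.exp (α * t) * D + t * Lbar * d + c * d) := by
                apply mul_le_mul_of_nonneg_left _ hKg
                linarith
        rw [Real.norm_eq_abs, ← mul_sub, abs_mul, abs_mul, abs_of_pos hl, abs_of_pos he]
        calc l * Real.exp (-l * t) * |g (S i₁ t y₁, i₁) - g (S i₂ t y₂, i₂)|
            ≤ l * Real.exp (-l * t)
              * (Kg * (L * Real.exp (α * t) * D + t * Lbar * d + c * d)) :=
              mul_le_mul_of_nonneg_left hgd (by positivity)
          _ = φ t := by
              rw [hφ]
              have h1 : Real.exp (-l * t) * Real.exp (α * t) = Real.exp (-((l - α) * t)) := by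
                rw [← Real.exp_add]; ring_nf
              have h2 : Real.exp (-l * t) = Real.exp (-(l * t)) := by rw [neg_mul]
              rw [h2] at h1 ⊢
              linear_combination Kg * L * D * l * h1
      have h := norm_integral_le_of_norm_le hφint hbound
      refine h.trans ?_
      have hφval : ∫ t in Set.Ioi (0:ℝ), φ t
          = Kg * L * D * l * (1/(l-α))
            + (Kg * Lbar * d * l * (1/l^2) + Kg * c * d * l * (1/l)) := by
        have h1 : Integrable (fun t : ℝ => Kg * L * D * l * Real.exp (-((l - α) * t)))
            (volume.restrict (Set.Ioi 0)) := (aux_intOn_exp hlα).const_mul _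
        have h2 : Integrable (fun t : ℝ => Kg * Lbar * d * l * (t * Real.exp (-(l * t))))
            (volume.restrict (Set.Ioi 0)) := (aux_intOn_texp hl).const_mul _
        have h3 : Integrable (fun t : ℝ => Kg * c * d * l * Real.exp (-(l * t)))
            (volume.restrict (Set.Ioi 0)) := (aux_intOn_exp hl).const_mul _
        have h23 : Integrable (fun t : ℝ => Kg * Lbar * d * l * (t * Real.exp (-(l * t)))
            + Kg * c * d * l * Real.exp (-(l * t))) (volume.restrict (Set.Ioi 0)) := h2.add h3
        simp only [hφ]
        rw [MeasureTheory.integral_add h1 h23, MeasureTheory.integral_add h2 h3,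
          MeasureTheory.integral_const_mul, MeasureTheory.integral_const_mul,
          MeasureTheory.integral_const_mul, aux_int_exp hlα, aux_int_texp hl, aux_int_exp hl]
      rw [hφval]
      have hA : 0 ≤ l * L / (l - α) := by positivity
      have hB : 0 ≤ Lbar / l := by positivity
      have e1 : Kg * L * D * l * (1/(l-α)) = Kg * (l * L / (l - α)) * D := by
        field_simp
      have e2 : Kg * Lbar * d * l * (1/l^2) = Kg * (Lbar / l) * d := by
        field_simp
      have e3 : Kg * c * d * l * (1/l) = Kg * c * d := by
        field_simp
      rw [e1, e2, e3]
      have hDnn : 0 ≤ D := norm_nonneg _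
      have hc0 : (0:ℝ) ≤ c := by linarith
      have t1 : 0 ≤ Kg * (l * L / (l - α)) * (c * d) :=
        mul_nonneg (mul_nonneg hKg hA) (mul_nonneg hc0 hd0)
      have t2 : 0 ≤ Kg * (Lbar / l) * D := mul_nonneg (mul_nonneg hKg hB) hDnn
      have t3 : 0 ≤ Kg * (Lbar / l) * (c * d - d) :=
        mul_nonneg (mul_nonneg hKg hB) (sub_nonneg.mpr hd1)
      have t4 : 0 ≤ Kg * c * D := mul_nonneg (mul_nonneg hKg hc0) hDnn
      have t5 : 0 ≤ Kg * c * (c * d - d) :=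
        mul_nonneg (mul_nonneg hKg hc0) (sub_nonneg.mpr hd1)
      nlinarith [t1, t2, t3, t4, t5]
end

section
/- Let Q and Π be substochastic/stochastic kernels with Q((x₁,x₂), A×X) ≤ Π(x₁, A) and Q((x₁,x₂), X×A) ≤ Π(x₂, A) for all A, and Q((x₁,x₂), X²) < 1. Define R((x₁,x₂), A×B) = (1 − Q((x₁,x₂),X²))^{-1} · (Π(x₁,A) − Q((x₁,x₂),A×X)) · (Π(x₂,B) − Q((x₁,x₂),X×B)). Then C := Q + R is a Markov kernel on X² whose marginals satisfy C((x₁,x₂), A×X) = Π(x₁,A) and C((x₁,x₂), X×A) = Π(x₂,A), i.e., C is a Markovian coupling of Π with itself. -/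
open MeasureTheory ProbabilityTheory
open scoped ENNReal

/-- coupling construction `C = Q + R`: given a stochastic kernel `Π`, a point
`(x₁,x₂)` and a submeasure `ν = Q((x₁,x₂),·)` on `X²` with `ν(A×X) ≤ Π(x₁,A)`,
`ν(X×A) ≤ Π(x₂,A)` and `ν(X²) < 1`, the measure `C = ν + R`, where on rectangles
`R(A×B) = (1−ν(X²))⁻¹ (Π(x₁,A) − ν(A×X)) (Π(x₂,B) − ν(X×B))`, is a probability measure
whose marginals are `Π(x₁,·)` and `Π(x₂,·)`. -/
theorem stmt_18 {X : Type*} [MeasurableSpace X] [TopologicalSpace X] [PolishSpace X]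
    [BorelSpace X]
    (K : Kernel X X) [IsMarkovKernel K] (x₁ x₂ : X)
    (ν : Measure (X × X))
    (hfst : ∀ A : Set X, MeasurableSet A → ν (A ×ˢ (Set.univ : Set X)) ≤ K x₁ A)
    (hsnd : ∀ A : Set X, MeasurableSet A → ν ((Set.univ : Set X) ×ˢ A) ≤ K x₂ A)
    (hsub : ν Set.univ < 1) :
    ∃ C : Measure (X × X), IsProbabilityMeasure C ∧
      (∀ A B : Set X, MeasurableSet A → MeasurableSet B →
        C (A ×ˢ B) = ν (A ×ˢ B)
          + (1 - ν Set.univ)⁻¹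
              * ((K x₁ A - ν (A ×ˢ (Set.univ : Set X)))
                  * (K x₂ B - ν ((Set.univ : Set X) ×ˢ B)))) ∧
      (∀ A : Set X, MeasurableSet A →
        C (A ×ˢ (Set.univ : Set X)) = K x₁ A ∧
        C ((Set.univ : Set X) ×ˢ A) = K x₂ A) := by
  have hνfin : IsFiniteMeasure ν := ⟨hsub.trans ENNReal.one_lt_top⟩
  have hfst' : ∀ A : Set X, MeasurableSet A → ν.fst A = ν (A ×ˢ (Set.univ : Set X)) := by
    intro A hA
    rw [Measure.fst_apply hA, ← Set.prod_univ]
  have hsnd' : ∀ A : Set X, MeasurableSet A → ν.snd A = ν ((Set.univ : Set X) ×ˢ A) := by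
    intro A hA
    rw [Measure.snd_apply hA, ← Set.univ_prod]
  have hle1 : ν.fst ≤ K x₁ := by
    rw [Measure.le_iff]
    intro s hs
    rw [hfst' s hs]; exact hfst s hs
  have hle2 : ν.snd ≤ K x₂ := by
    rw [Measure.le_iff]
    intro s hs
    rw [hsnd' s hs]; exact hsnd s hs
  set μ₁ := K x₁ - ν.fst with hμ₁def
  set μ₂ := K x₂ - ν.snd with hμ₂def
  have hμ₁fin : IsFiniteMeasure μ₁ := isFiniteMeasure_of_le _ (Measure.sub_le)
  have hμ₂fin : IsFiniteMeasure μ₂ := isFiniteMeasure_of_le _ (Measure.sub_le)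
  have hμ₁ : ∀ A : Set X, MeasurableSet A →
      μ₁ A = K x₁ A - ν (A ×ˢ (Set.univ : Set X)) := by
    intro A hA
    rw [hμ₁def, Measure.sub_apply hA hle1, hfst' A hA]
  have hμ₂ : ∀ A : Set X, MeasurableSet A →
      μ₂ A = K x₂ A - ν ((Set.univ : Set X) ×ˢ A) := by
    intro A hA
    rw [hμ₂def, Measure.sub_apply hA hle2, hsnd' A hA]
  set c := ν (Set.univ : Set (X × X)) with hc
  have hcu : ν (Set.univ ×ˢ (Set.univ : Set X)) = c := by
    rw [hc, Set.univ_prod_univ]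
  have hμ₁u : μ₁ Set.univ = 1 - c := by
    rw [hμ₁ _ MeasurableSet.univ, hcu, measure_univ]
  have hμ₂u : μ₂ Set.univ = 1 - c := by
    rw [hμ₂ _ MeasurableSet.univ, hcu, measure_univ]
  have h1c_ne : (1 : ℝ≥0∞) - c ≠ 0 := by
    simp only [ne_eq, tsub_eq_zero_iff_le, not_le]
    exact hsub
  have h1c_top : (1 : ℝ≥0∞) - c ≠ ⊤ := by
    exact (tsub_le_self.trans_lt ENNReal.one_lt_top).ne
  refine ⟨ν + ((1 - c)⁻¹ • (μ₁.prod μ₂)), ?_, ?_, ?_⟩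
  · constructor
    rw [Measure.add_apply, Measure.smul_apply, smul_eq_mul,
      ← Set.univ_prod_univ, Measure.prod_prod, hμ₁u, hμ₂u, Set.univ_prod_univ]
    rw [← mul_assoc, ENNReal.inv_mul_cancel h1c_ne h1c_top, one_mul]
    rw [hc] at hsub ⊢
    exact add_tsub_cancel_of_le hsub.le
  · intro A B hA hB
    rw [Measure.add_apply, Measure.smul_apply, smul_eq_mul,
      Measure.prod_prod, hμ₁ A hA, hμ₂ B hB]
  · intro A hA
    constructor
    · rw [Measure.add_apply, Measure.smul_apply, smul_eq_mul,
        Measure.prod_prod, hμ₁ A hA, hμ₂u, mul_comm _ ((1:ℝ≥0∞)-c),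
        ← mul_assoc, ENNReal.inv_mul_cancel h1c_ne h1c_top, one_mul, add_comm]
      exact tsub_add_cancel_of_le (hfst A hA)
    · rw [Measure.add_apply, Measure.smul_apply, smul_eq_mul,
        Measure.prod_prod, hμ₂ A hA, hμ₁u, ← mul_assoc,
        ENNReal.inv_mul_cancel h1c_ne h1c_top, one_mul, add_comm]
      exact tsub_add_cancel_of_le (hsnd A hA)
end
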